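/- arXiv:2209.09868 — 5 statements merged into one kernel-verified Lean document; each statement's English description precedes it below -/
import Mathlib

section
/- Let φ : ℝ^m → ℝ^d satisfy |φ(x)·φ(x') − x·x'| ≤ Δ for all x, x' in Z ∪ Z', where Z, Z' ⊂ ℝ^m are finite sets whose convex hulls are at squared distance γ = ‖p − q‖² > 0 (p, q the closest points of conv(Z), conv(Z')). If Δ < γ/6, then there exist θ ∈ ℝ^d and ν ∈ ℝ such that θ·φ(x) + ν > 0 for all x ∈ Z and θ·φ(x') + ν < 0 for all x' ∈ Z'. -/
open RealInnerProductSpace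

section aux

variable {E F : Type*} [NormedAddCommGroup E] [InnerProductSpace ℝ E]
  [NormedAddCommGroup F] [InnerProductSpace ℝ F]

lemma conv_approx (s : Finset E) (w : E → ℝ) (hw : ∀ y ∈ s, 0 ≤ w y)
    (hsum : ∑ y ∈ s, w y = 1) (g : E → F) (u : F) (v : E) (Δ : ℝ)
    (h : ∀ y ∈ s, |⟪g y, u⟫ - ⟪y, v⟫| ≤ Δ) :
    |⟪∑ y ∈ s, w y • g y, u⟫ - ⟪∑ y ∈ s, w y • y, v⟫| ≤ Δ := by
  rw [sum_inner, sum_inner]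
  simp_rw [real_inner_smul_left]
  rw [← Finset.sum_sub_distrib]
  calc |∑ y ∈ s, (w y * ⟪g y, u⟫ - w y * ⟪y, v⟫)|
      ≤ ∑ y ∈ s, |w y * ⟪g y, u⟫ - w y * ⟪y, v⟫| := Finset.abs_sum_le_sum_abs _ _
    _ ≤ ∑ y ∈ s, w y * Δ := by
        refine Finset.sum_le_sum fun y hy => ?_
        rw [← mul_sub, abs_mul, abs_of_nonneg (hw y hy)]
        exact mul_le_mul_of_nonneg_left (h y hy) (hw y hy)
    _ = Δ := by rw [← Finset.sum_mul, hsum, one_mul]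

lemma closest_inner {K : Set E} (hK : Convex ℝ K) {u v : E} (hv : v ∈ K)
    (hmin : ∀ w ∈ K, ‖u - v‖ ≤ ‖u - w‖) : ∀ w ∈ K, ⟪u - v, w - v⟫ ≤ 0 := by
  haveI : Nonempty (↥K) := ⟨⟨v, hv⟩⟩
  rw [← norm_eq_iInf_iff_real_inner_le_zero hK hv]
  refine le_antisymm (le_ciInf fun w => hmin w w.2) ?_
  have bdd : BddBelow (Set.range fun w : K => ‖u - ↑w‖) := by
    refine ⟨0, fun x hx => ?_⟩
    obtain ⟨w, rfl⟩ := hx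
    exact norm_nonneg _
  exact ciInf_le bdd ⟨v, hv⟩

end aux

/-- Theorem 1 (separability under Δ-dot-product preserving encoding). -/
theorem stmt_0 {m d : ℕ}
    (φ : EuclideanSpace ℝ (Fin m) → EuclideanSpace ℝ (Fin d))
    (Z Z' : Set (EuclideanSpace ℝ (Fin m)))
    (hZfin : Z.Finite) (hZ'fin : Z'.Finite)
    (Δ γ : ℝ)
    (hφ : ∀ x ∈ Z ∪ Z', ∀ x' ∈ Z ∪ Z', |⟪φ x, φ x'⟫ - ⟪x, x'⟫| ≤ Δ)
    (p q : EuclideanSpace ℝ (Fin m))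
    (hp : p ∈ convexHull ℝ Z) (hq : q ∈ convexHull ℝ Z')
    (hclosest : ∀ p' ∈ convexHull ℝ Z, ∀ q' ∈ convexHull ℝ Z', ‖p - q‖ ≤ ‖p' - q'‖)
    (hγ : γ = ‖p - q‖ ^ 2) (hγpos : 0 < γ)
    (hΔ : Δ < γ / 6) :
    ∃ (θ : EuclideanSpace ℝ (Fin d)) (ν : ℝ),
      (∀ x ∈ Z, ⟪θ, φ x⟫ + ν > 0) ∧ (∀ x' ∈ Z', ⟪θ, φ x'⟫ + ν < 0) := by
  -- convex combination representations
  have hpZ : p ∈ convexHull ℝ (↑hZfin.toFinset : Set _) := by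
    rwa [hZfin.coe_toFinset]
  have hqZ' : q ∈ convexHull ℝ (↑hZ'fin.toFinset : Set _) := by
    rwa [hZ'fin.coe_toFinset]
  rw [Finset.convexHull_eq] at hpZ hqZ'
  obtain ⟨a, ha, hasum, hap⟩ := hpZ
  obtain ⟨b, hb, hbsum, hbq⟩ := hqZ'
  rw [Finset.centerMass_eq_of_sum_1 _ _ hasum] at hap
  rw [Finset.centerMass_eq_of_sum_1 _ _ hbsum] at hbq
  simp only [id_eq] at hap hbq
  set Zf := hZfin.toFinset with hZf
  set Z'f := hZ'fin.toFinset with hZ'f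
  set P : EuclideanSpace ℝ (Fin d) := ∑ y ∈ Zf, a y • φ y with hP
  set Q : EuclideanSpace ℝ (Fin d) := ∑ y ∈ Z'f, b y • φ y with hQ
  have hZmem : ∀ y ∈ Zf, y ∈ Z ∪ Z' := fun y hy =>
    Or.inl (hZfin.mem_toFinset.mp hy)
  have hZ'mem : ∀ y ∈ Z'f, y ∈ Z ∪ Z' := fun y hy =>
    Or.inr (hZ'fin.mem_toFinset.mp hy)
  -- approximation facts
  have hPx : ∀ x ∈ Z ∪ Z', |⟪P, φ x⟫ - ⟪p, x⟫| ≤ Δ := by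
    intro x hx
    rw [hP, ← hap]
    exact conv_approx Zf a ha hasum φ (φ x) x Δ (fun y hy => hφ y (hZmem y hy) x hx)
  have hQx : ∀ x ∈ Z ∪ Z', |⟪Q, φ x⟫ - ⟪q, x⟫| ≤ Δ := by
    intro x hx
    rw [hQ, ← hbq]
    exact conv_approx Z'f b hb hbsum φ (φ x) x Δ (fun y hy => hφ y (hZ'mem y hy) x hx)
  have hPP : |⟪P, P⟫ - ⟪p, p⟫| ≤ Δ := by
    have h := conv_approx Zf a ha hasum φ P p Δ (fun y hy => by
      rw [real_inner_comm P (φ y), real_inner_comm p y]; exact hPx y (hZmem y hy))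
    rwa [← hP, hap] at h
  have hQQ : |⟪Q, Q⟫ - ⟪q, q⟫| ≤ Δ := by
    have h := conv_approx Z'f b hb hbsum φ Q q Δ (fun y hy => by
      rw [real_inner_comm Q (φ y), real_inner_comm q y]; exact hQx y (hZ'mem y hy))
    rwa [← hQ, hbq] at h
  -- variational inequalities
  have hvarZ : ∀ w ∈ convexHull ℝ Z, ⟪q - p, w - p⟫ ≤ 0 := by
    refine closest_inner (convex_convexHull ℝ Z) hp (fun w hw => ?_)
    rw [norm_sub_rev q p, norm_sub_rev q w]
    exact hclosest w hw q hq
  have hvarZ' : ∀ w ∈ convexHull ℝ Z', ⟪p - q, w - q⟫ ≤ 0 := by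
    refine closest_inner (convex_convexHull ℝ Z') hq (fun w hw => ?_)
    exact hclosest p hp w hw
  -- gamma expansion
  have hγeq : γ = ⟪p, p⟫ - 2 * ⟪p, q⟫ + ⟪q, q⟫ := by
    rw [hγ, ← real_inner_self_eq_norm_sq, inner_sub_left, inner_sub_right, inner_sub_right,
      real_inner_comm q p]
    ring
  refine ⟨P - Q, -(⟪P, P⟫ - ⟪Q, Q⟫) / 2, fun x hx => ?_, fun x hx => ?_⟩
  · have h1 := hPx x (Or.inl hx)
    have h2 := hQx x (Or.inl hx)
    have h3 := hvarZ x (subset_convexHull ℝ Z hx)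
    rw [inner_sub_left, inner_sub_right, inner_sub_right] at h3
    rw [abs_le] at h1 h2 hPP hQQ
    rw [inner_sub_left]
    have hc := real_inner_comm q p
    linarith [h1.1, h2.2, hPP.2, hQQ.1]
  · have h1 := hPx x (Or.inr hx)
    have h2 := hQx x (Or.inr hx)
    have h3 := hvarZ' x (subset_convexHull ℝ Z' hx)
    rw [inner_sub_left, inner_sub_right, inner_sub_right] at h3
    rw [abs_le] at h1 h2 hPP hQQ
    rw [inner_sub_left]
    have hc := real_inner_comm q p
    linarith [h1.2, h2.1, hPP.1, hQQ.2]
end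

section
/- Let X₁, …, X_N be i.i.d. uniform on [d], let Z count the number of distinct values among them, and set K = N(N−1)/(2d). Then for any t > 0, P(Z ≤ N − N(N−1)/(2d) − t) ≤ exp(−t²/(2K + 2t/3)). -/
/-!
Let `D x` be the number of distinct entries of a tuple `x`. Appending a uniform value to
`x : Fin n → α` raises `D` by one unless the value is already an entry, which happens with
probability `D x / d ≤ n / d`. Hence for `r = exp (-l) ≤ 1`,
`E[r ^ D] ≤ ∏ j < N, (r + (j / d) (1 - r)) ≤ exp (-l N + (exp l - 1) K)`: this is the
exponential supermartingale behind Freedman's inequality, the predictable variance being at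
most `∑ j / d = K`. Chernoff's bound gives `exp ((exp l - 1 - l) K - l t)`, and
`l = t / (K + t / 3)` together with `exp l - 1 - l ≤ l² / (2 (1 - l / 3))` yields the Bernstein
form. Since `Z i` indicates a first occurrence, `∑ i, Z i = D X`.
-/

open Finset Real MeasureTheory ProbabilityTheory

lemma two_sub_mul_exp_le {u : ℝ} (hu : 0 ≤ u) : (2 - u) * exp u ≤ 2 + u := by
  rcases lt_or_ge u 2 with hu2 | hu2
  · have := exp_le_two_add_div_two_sub hu hu2
    rwa [le_div_iff₀ (by linarith), mul_comm] at this
  · nlinarith [exp_pos u]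

lemma exp_sub_one_sub_le {u : ℝ} (hu0 : 0 ≤ u) (hu3 : u < 3) :
    exp u - 1 - u ≤ u ^ 2 / (2 * (1 - u / 3)) := by
  set f : ℝ → ℝ := fun u => u ^ 2 / 2 - (1 - u / 3) * (exp u - 1 - u)
  have hderiv : ∀ x, HasDerivAt f ((2 + x - (2 - x) * exp x) / 3) x := fun x => by
    refine (((hasDerivAt_pow 2 x).div_const 2).sub
      ((((hasDerivAt_id' x).div_const 3).const_sub 1).mul
        (((hasDerivAt_exp x).sub_const 1).sub (hasDerivAt_id' x)))).congr_deriv ?_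
    simp only [Pi.sub_apply, Nat.cast_ofNat]
    ring
  have hmono : MonotoneOn f (Set.Ici 0) :=
    monotoneOn_of_hasDerivWithinAt_nonneg (convex_Ici 0) (by fun_prop)
      (fun x _ => (hderiv x).hasDerivWithinAt)
      (fun x hx => by
        rw [interior_Ici] at hx
        linarith [two_sub_mul_exp_le (le_of_lt hx)])
  have := hmono Set.self_mem_Ici hu0 hu0
  simp only [f, exp_zero] at this
  rw [le_div_iff₀ (by linarith)]
  nlinarith

lemma exists_tilt_le_bernstein_exponent {K t : ℝ} (hK : 0 ≤ K) (ht : 0 < t) :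
    ∃ l ≥ 0, (exp l - 1 - l) * K - l * t ≤ -t ^ 2 / (2 * K + 2 * t / 3) := by
  rcases hK.eq_or_lt with rfl | hK
  · refine ⟨3, by norm_num, ?_⟩
    rw [show -t ^ 2 / (2 * 0 + 2 * t / 3) = -(3 / 2) * t by field_simp; ring]
    linarith
  set l := t / (K + t / 3)
  have hl3 : l < 3 := by
    rw [div_lt_iff₀ (by positivity)]
    linarith
  refine ⟨l, by positivity, ?_⟩
  calc (exp l - 1 - l) * K - l * t ≤ l ^ 2 / (2 * (1 - l / 3)) * K - l * t := by
        gcongr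
        exact exp_sub_one_sub_le (by positivity) hl3
    _ = -t ^ 2 / (2 * K + 2 * t / 3) := by
        simp only [l]
        field_simp
        ring

lemma mul_exp_neg_add_mul_one_sub_le {d : ℝ} (hd : 0 < d) (l x : ℝ) :
    d * exp (-l) + x * (1 - exp (-l)) ≤ d * exp (x * (exp l - 1) / d - l) :=
  calc d * exp (-l) + x * (1 - exp (-l))
      = d * exp (-l) * (1 + x * (exp l - 1) / d) := by
        have hinv : exp (-l) * exp l = 1 := by rw [← exp_add, neg_add_cancel, exp_zero]
        field_simp
        linear_combination -x * hinv
    _ ≤ d * exp (-l) * exp (x * (exp l - 1) / d) := by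
        gcongr
        linarith [add_one_le_exp (x * (exp l - 1) / d)]
    _ = d * exp (x * (exp l - 1) / d - l) := by
        rw [mul_assoc, ← exp_add, neg_add_eq_sub]

lemma prod_range_le_exp {d l : ℝ} (hd : 0 < d) (hl : 0 ≤ l) (n : ℕ) :
    ∏ j ∈ range n, (d * exp (-l) + j * (1 - exp (-l)))
      ≤ d ^ n * exp ((exp l - 1) * (n * (n - 1) / (2 * d)) - l * n) := by
  induction n with
  | zero => simp
  | succ n ih =>
    have hfactor_nonneg : 0 ≤ d * exp (-l) + n * (1 - exp (-l)) := by
      have : exp (-l) ≤ 1 := exp_le_one_iff.2 (neg_nonpos.2 hl)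
      nlinarith [exp_pos (-l)]
    calc ∏ j ∈ range (n + 1), (d * exp (-l) + j * (1 - exp (-l)))
        = (∏ j ∈ range n, (d * exp (-l) + j * (1 - exp (-l))))
            * (d * exp (-l) + n * (1 - exp (-l))) := prod_range_succ _ n
      _ ≤ d ^ n * exp ((exp l - 1) * (n * (n - 1) / (2 * d)) - l * n)
            * (d * exp (n * (exp l - 1) / d - l)) :=
          mul_le_mul ih (mul_exp_neg_add_mul_one_sub_le hd l n) hfactor_nonneg (by positivity)
      _ = d ^ (n + 1) * exp ((exp l - 1) * ((n + 1 : ℕ) * ((n + 1 : ℕ) - 1) / (2 * d))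
            - l * (n + 1 : ℕ)) := by
          rw [mul_mul_mul_comm, ← exp_add, pow_succ]
          congr 2
          push_cast
          field_simp
          ring

lemma card_filter_le_sum_exp {β : Type*} (s : Finset β) (f : β → ℝ) (c : ℝ) {l : ℝ}
    (hl : 0 ≤ l) :
    (#(s.filter (f · ≤ c)) : ℝ) ≤ ∑ x ∈ s, exp (l * (c - f x)) := by
  rw [card_filter, Nat.cast_sum]
  refine sum_le_sum fun x _ => ?_
  split_ifs with h
  · simpa using one_le_exp (mul_nonneg hl (sub_nonneg.2 h))
  · simp [(exp_pos _).le]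

section DistinctValues

variable {α : Type*} [DecidableEq α]

lemma Fin.image_snoc {n : ℕ} (y : Fin n → α) (v : α) :
    univ.image (Fin.snoc y v : Fin (n + 1) → α) = insert v (univ.image y) := by
  apply coe_injective
  push_cast [coe_image, coe_insert, Set.image_univ]
  exact Fin.range_snoc y v

lemma sum_pow_card_insert [Fintype α] (S : Finset α) (r : ℝ) :
    ∑ v : α, r ^ #(insert v S) = r ^ #S * (Fintype.card α * r + #S * (1 - r)) := by
  have hS : #S ≤ Fintype.card α := card_le_univ S
  simp only [card_insert_eq_ite, apply_ite (r ^ ·), sum_ite, sum_const, nsmul_eq_mul]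
  rw [filter_univ_mem, filter_notMem_eq_sdiff, card_univ_sdiff, Nat.cast_sub hS]
  ring

lemma sum_pow_card_image_le [Fintype α] {r : ℝ} (hr0 : 0 ≤ r) (hr1 : r ≤ 1) (n : ℕ) :
    ∑ x : Fin n → α, r ^ #(univ.image x)
      ≤ ∏ j ∈ range n, (Fintype.card α * r + j * (1 - r)) := by
  induction n with
  | zero => simp
  | succ n ih =>
    have hfactor : ∀ y : Fin n → α, Fintype.card α * r + #(univ.image y) * (1 - r)
        ≤ Fintype.card α * r + n * (1 - r) := fun y => by
      have : (#(univ.image y) : ℝ) ≤ n := by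
        exact_mod_cast (card_image_le.trans (card_univ.trans (Fintype.card_fin n)).le)
      nlinarith
    calc ∑ x : Fin (n + 1) → α, r ^ #(univ.image x)
        = ∑ y : Fin n → α, r ^ #(univ.image y)
            * (Fintype.card α * r + #(univ.image y) * (1 - r)) := by
          rw [← (Fin.snocEquiv fun _ => α).sum_comp, Fintype.sum_prod_type_right]
          simp only [Fin.snocEquiv, Equiv.coe_fn_mk, Fin.image_snoc, sum_pow_card_insert]
      _ ≤ ∑ y : Fin n → α, r ^ #(univ.image y) * (Fintype.card α * r + n * (1 - r)) :=
          sum_le_sum fun y _ => mul_le_mul_of_nonneg_left (hfactor y) (by positivity)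
      _ ≤ (∏ j ∈ range n, (Fintype.card α * r + j * (1 - r)))
            * (Fintype.card α * r + n * (1 - r)) := by
          rw [← sum_mul]
          exact mul_le_mul_of_nonneg_right ih (by nlinarith)
      _ = ∏ j ∈ range (n + 1), (Fintype.card α * r + j * (1 - r)) := (prod_range_succ _ n).symm

lemma card_filter_forall_lt_ne_eq_card_image {ι : Type*} [Fintype ι] [LinearOrder ι]
    (x : ι → α) :
    #(univ.filter fun i => ∀ j < i, x j ≠ x i) = #(univ.image x) := by
  refine card_bij (fun i _ => x i) (fun i _ => mem_image_of_mem x (mem_univ i)) ?_ ?_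
  · intro i hi i' hi' hxi
    simp only [mem_filter, mem_univ, true_and] at hi hi'
    by_contra hne
    rcases lt_or_gt_of_ne hne with h | h
    · exact hi' i h hxi
    · exact hi i' h hxi.symm
  · intro v hv
    have hne : (univ.filter fun i => x i = v).Nonempty := by simpa [Finset.Nonempty] using hv
    refine ⟨_, ?_, (mem_filter.1 (min'_mem _ hne)).2⟩
    simp only [mem_filter, mem_univ, true_and]
    intro j hj hxj
    exact not_le.2 hj (min'_le _ j (by simp [hxj, (mem_filter.1 (min'_mem _ hne)).2]))

lemma card_filter_card_image_le_exp [Fintype α] [Nonempty α]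
    {l : ℝ} (hl : 0 ≤ l) (N : ℕ) (c : ℝ) :
    (#(univ.filter fun x : Fin N → α => (#(univ.image x) : ℝ) ≤ c) : ℝ)
      ≤ Fintype.card α ^ N
        * exp ((exp l - 1) * (N * (N - 1) / (2 * Fintype.card α)) - l * N + l * c) := by
  set d : ℝ := (Fintype.card α : ℝ)
  calc (#(univ.filter fun x : Fin N → α => (#(univ.image x) : ℝ) ≤ c) : ℝ)
      ≤ ∑ x : Fin N → α, exp (l * (c - #(univ.image x))) := card_filter_le_sum_exp _ _ _ hl
    _ = exp (l * c) * ∑ x : Fin N → α, exp (-l) ^ #(univ.image x) := by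
        rw [mul_sum]
        refine sum_congr rfl fun x _ => ?_
        rw [← exp_nat_mul, ← exp_add]
        ring_nf
    _ ≤ exp (l * c) * ∏ j ∈ range N, (d * exp (-l) + j * (1 - exp (-l))) := by
        gcongr
        exact sum_pow_card_image_le (exp_pos (-l)).le (exp_le_one_iff.2 (neg_nonpos.2 hl)) N
    _ ≤ exp (l * c) * (d ^ N * exp ((exp l - 1) * (N * (N - 1) / (2 * d)) - l * N)) := by
        gcongr
        exact prod_range_le_exp (by positivity) hl N
    _ = d ^ N * exp ((exp l - 1) * (N * (N - 1) / (2 * d)) - l * N + l * c) := by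
        rw [mul_left_comm, ← exp_add, add_comm (l * c)]

end DistinctValues

lemma measure_tuple_mem_of_iIndepFun {Ω ι α : Type*} [MeasurableSpace Ω] {μ : Measure Ω}
    [Fintype ι] [MeasurableSpace α] [MeasurableSingletonClass α] {X : ι → Ω → α}
    (hmeas : ∀ i, Measurable (X i)) (hindep : iIndepFun X μ) {p : ENNReal}
    (hp : ∀ i v, μ {ω | X i ω = v} = p) (A : Finset (ι → α)) :
    μ {ω | (fun i => X i ω) ∈ A} = #A * p ^ Fintype.card ι := by
  have hfiber : ∀ y : ι → α,
      (fun ω i => X i ω) ⁻¹' {y} = ⋂ i ∈ univ, X i ⁻¹' {y i} := by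
    intro y
    ext ω
    simp [funext_iff]
  have hfiber_measure : ∀ y : ι → α,
      μ ((fun ω i => X i ω) ⁻¹' {y}) = p ^ Fintype.card ι := by
    intro y
    rw [hfiber, hindep.measure_inter_preimage_eq_mul univ fun i _ => measurableSet_singleton _]
    simp [Set.preimage, hp]
  change μ ((fun ω i => X i ω) ⁻¹' A) = _
  rw [← sum_measure_preimage_singleton A fun y _ => ?_]
  · simp [hfiber_measure]
  · rw [hfiber]
    exact .biInter (Set.to_countable _) fun i _ => hmeas i (measurableSet_singleton _)

theorem stmt_12_general {Ω : Type*} [m0 : MeasurableSpace Ω] (μ : Measure Ω)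
    (N d : ℕ) (hd : 0 < d)
    (X : Fin N → Ω → Fin d)
    (hmeas : ∀ i, Measurable (X i))
    (hindep : iIndepFun X μ)
    (hunif : ∀ i v, μ {ω | X i ω = v} = (d : ENNReal)⁻¹)
    (Z : Fin N → Ω → ℝ)
    (hZ : ∀ i ω, Z i ω = if ∀ j, j < i → X j ω ≠ X i ω then 1 else 0)
    (K : ℝ) (hK : K = (N : ℝ) * (N - 1) / (2 * d))
    (t : ℝ) (ht : 0 < t) :
    (μ {ω | (∑ i, Z i ω) ≤ (N : ℝ) - N * (N - 1) / (2 * d) - t}).toReal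
      ≤ Real.exp (-t ^ 2 / (2 * K + 2 * t / 3)) := by
  set c : ℝ := (N : ℝ) - N * (N - 1) / (2 * d) - t
  set B : Finset (Fin N → Fin d) := univ.filter fun x => (#(univ.image x) : ℝ) ≤ c
  have hdistinct : ∀ ω, ∑ i, Z i ω = #(univ.image fun i => X i ω) := fun ω => by
    simp only [hZ, sum_boole]
    congr 1
    convert card_filter_forall_lt_ne_eq_card_image fun i => X i ω
  have hprob : (μ {ω | ∑ i, Z i ω ≤ c}).toReal = #B * ((d : ℝ)⁻¹) ^ N := by
    have hevent : {ω | ∑ i, Z i ω ≤ c} = {ω | (fun i => X i ω) ∈ B} := by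
      ext ω
      simp [B, hdistinct]
    rw [hevent, measure_tuple_mem_of_iIndepFun hmeas hindep hunif]
    simp
  have hK0 : 0 ≤ K := by
    rcases Nat.eq_zero_or_pos N with rfl | hN
    · simp [hK]
    · have : (1 : ℝ) ≤ N := by exact_mod_cast hN
      rw [hK]
      positivity
  obtain ⟨l, hl, hexp⟩ := exists_tilt_le_bernstein_exponent hK0 ht
  have hcount : (#B : ℝ) ≤ d ^ N * exp ((exp l - 1 - l) * K - l * t) := by
    have : NeZero d := ⟨hd.ne'⟩
    have := card_filter_card_image_le_exp (α := Fin d) hl N c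
    simp only [Fintype.card_fin] at this
    convert this using 3
    simp only [c, hK]
    ring
  rw [hprob]
  calc (#B : ℝ) * ((d : ℝ)⁻¹) ^ N
      ≤ d ^ N * exp ((exp l - 1 - l) * K - l * t) * ((d : ℝ)⁻¹) ^ N := by gcongr
    _ = exp ((exp l - 1 - l) * K - l * t) := by
        rw [inv_pow, mul_right_comm, mul_inv_cancel₀ (by positivity), one_mul]
    _ ≤ exp (-t ^ 2 / (2 * K + 2 * t / 3)) := exp_le_exp.2 hexp

/-- concentration of the number of distinct values among i.i.d.
uniform draws on `[d]` (Freedman-style lower tail). -/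
theorem stmt_12 {Ω : Type*} [m0 : MeasurableSpace Ω] (μ : Measure Ω)
    [IsProbabilityMeasure μ]
    (N d : ℕ) (hd : 0 < d)
    (X : Fin N → Ω → Fin d)
    (hmeas : ∀ i, Measurable (X i))
    (hindep : iIndepFun X μ)
    (hunif : ∀ i v, μ {ω | X i ω = v} = (d : ENNReal)⁻¹)
    (Z : Fin N → Ω → ℝ)
    (hZ : ∀ i ω, Z i ω = if ∀ j, j < i → X j ω ≠ X i ω then 1 else 0)
    (K : ℝ) (hK : K = (N : ℝ) * (N - 1) / (2 * d))
    (t : ℝ) (ht : 0 < t) :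
    (μ {ω | (∑ i, Z i ω) ≤ (N : ℝ) - N * (N - 1) / (2 * d) - t}).toReal
      ≤ Real.exp (-t ^ 2 / (2 * K + 2 * t / 3)) :=
  stmt_12_general (m0 := m0) μ N d hd X hmeas hindep hunif Z hZ K hK t ht
end

section
/- Let A be an alphabet of size m, ψ₁,…,ψ_k be hash-functions A → [d] drawn uniformly from an s-independent family, and for any s-element set X ⊂ A let Z be the number of distinct values among the sk hashes {ψ_j(a) : a ∈ X, j ∈ [k]}. Then with probability at least 1 − δ, simultaneously for all C(m,s) sets X of size s: Z ≥ sk − s²k²/(2d) − max{ √((2 s³ k² / d) log(m/δ)), (4s/3) log(m/δ) }. -/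
/-!
Fix an `s`-set `X`. Its `N = sk` hashes form a uniform random tuple `g : ι → Fin d`, and
revealing them one at a time, the number of collisions `N - #(image g)` increases exactly when
the next hash falls into the current image, of size at most the number of hashes revealed so
far. Summing over all tuples therefore gives the exponential moment bound
`E exp (l (N - #image)) ≤ exp ((exp l - 1) C(N, 2) / d)`, and Markov's inequality with the
Bernstein choice of `l` bounds `P (#image < N - B - t)` by `exp (-t² / (2 (B + t/3)))`, where
`B = s²k²/(2d) ≥ C(N, 2)/d`. The chosen `t` makes this at most `(δ/m)^s`, and a union bound over
the `C(m, s) ≤ m^s` sets `X` finishes the proof.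
-/

open MeasureTheory ProbabilityTheory Finset Real
open scoped Nat

theorem Real.exp_le_one_add_add_sq_div {x : ℝ} (hx₀ : 0 ≤ x) (hx₃ : x < 3) :
    exp x ≤ 1 + x + x ^ 2 / (2 * (1 - x / 3)) := by
  have hS : Summable (fun n : ℕ => x ^ n / n !) := summable_pow_div_factorial x
  have hterm (i : ℕ) : x ^ (i + 2) / (i + 2)! ≤ x ^ 2 / 2 * (x / 3) ^ i := by
    have h : (2 * 3 ^ i : ℝ) ≤ (i + 2)! := by
      simpa [add_comm] using
        (Nat.cast_le (α := ℝ)).2 (Nat.factorial_mul_pow_le_factorial (m := 2) (n := i))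
    calc x ^ (i + 2) / (i + 2)! ≤ x ^ (i + 2) / (2 * 3 ^ i) := by gcongr
      _ = x ^ 2 / 2 * (x / 3) ^ i := by rw [div_pow, pow_add]; field_simp
  have hgeom : HasSum (fun i : ℕ => x ^ 2 / 2 * (x / 3) ^ i) (x ^ 2 / 2 * (1 - x / 3)⁻¹) :=
    (hasSum_geometric_of_lt_one (by positivity) (by linarith)).mul_left _
  calc exp x = (∑ i ∈ range 2, x ^ i / i !) + ∑' i : ℕ, x ^ (i + 2) / (i + 2)! := by
        rw [exp_eq_exp_ℝ, NormedSpace.exp_eq_tsum_div, hS.sum_add_tsum_nat_add]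
    _ ≤ 1 + x + x ^ 2 / 2 * (1 - x / 3)⁻¹ := by
        gcongr
        · simp [sum_range_succ]
        · exact (((summable_nat_add_iff 2).2 hS).tsum_le_tsum hterm hgeom.summable).trans_eq
            hgeom.tsum_eq
    _ = 1 + x + x ^ 2 / (2 * (1 - x / 3)) := by field_simp

theorem exists_exp_sub_one_mul_sub_le {B t a : ℝ} (hB : 0 < B) (ht : 0 < t)
    (hvar : 4 * a * B ≤ t ^ 2) (hscale : 4 * a / 3 ≤ t) :
    ∃ l, 0 ≤ l ∧ (exp l - 1) * B - l * (B + t) ≤ -a := by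
  have hden : 0 < B + t / 3 := by positivity
  -- the minimiser of `l ^ 2 / (2 * (1 - l / 3)) * B - l * t`
  set l := t / (B + t / 3) with hl
  have hl₀ : 0 ≤ l := by positivity
  have hl₃ : l < 3 := by rw [div_lt_iff₀ hden]; linarith
  refine ⟨l, hl₀, ?_⟩
  have hopt : l ^ 2 / (2 * (1 - l / 3)) * B - l * t = -(t ^ 2 / (2 * (B + t / 3))) := by
    have : 1 - l / 3 = B / (B + t / 3) := by rw [hl]; field_simp; ring
    rw [this, hl]; field_simp; ring
  have ha : a ≤ t ^ 2 / (2 * (B + t / 3)) := by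
    rw [le_div_iff₀ (by positivity)]; nlinarith
  have hexp := exp_le_one_add_add_sq_div hl₀ hl₃
  nlinarith

theorem Nat.choose_mul_div_pow_le {δ : ℝ} (hδ₀ : 0 ≤ δ) (hδ₁ : δ ≤ 1) (m : ℕ) {s : ℕ}
    (hs : s ≠ 0) : (m.choose s : ℝ) * (δ / m) ^ s ≤ δ :=
  calc (m.choose s : ℝ) * (δ / m) ^ s ≤ (m : ℝ) ^ s * (δ / m) ^ s := by
        gcongr; exact_mod_cast Nat.choose_le_pow m s
    _ = (m * (δ / m)) ^ s := (mul_pow _ _ _).symm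
    _ ≤ δ ^ s := by
        gcongr
        rcases eq_or_ne (m : ℝ) 0 with hm | hm
        · simpa [hm] using hδ₀
        · rw [mul_div_cancel₀ _ hm]
    _ ≤ δ := pow_le_of_le_one hδ₀ hδ₁ hs

theorem Fin.image_univ_cons {β : Type*} [DecidableEq β] {n : ℕ} (v : β) (g : Fin n → β) :
    univ.image (Fin.cons v g : Fin (n + 1) → β) = insert v (univ.image g) :=
  coe_injective <| by simp [Fin.range_cons]

theorem Finset.image_univ_product {α A γ : Type*} [Fintype α] [DecidableEq γ] (X : Finset A)
    (f : α × A → γ) : (univ ×ˢ X).image f = univ.image fun q : α × X => f (q.1, q.2) := by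
  ext c; simp

section Collisions

variable {β : Type*} [Fintype β] [DecidableEq β]

theorem sum_exp_mul_card_insert (S : Finset β) (l : ℝ) :
    ∑ v, exp (l * (#S + 1 - #(insert v S))) = Fintype.card β + #S * (exp l - 1) := by
  have hterm (v : β) :
      exp (l * (#S + 1 - #(insert v S))) = 1 + if v ∈ S then exp l - 1 else 0 := by
    by_cases hv : v ∈ S
    · simp [hv]
    · simp [hv, card_insert_of_notMem]
  simp only [hterm, sum_add_distrib, sum_const, nsmul_eq_mul, mul_one, sum_ite_mem, univ_inter]
  rw [card_univ]

theorem sum_exp_mul_card_insert_le [Nonempty β] (S : Finset β) (l : ℝ) :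
    ∑ v, exp (l * (#S + 1 - #(insert v S))) ≤
      Fintype.card β * exp (#S * (exp l - 1) / Fintype.card β) := by
  have hd : (0 : ℝ) < Fintype.card β := by exact_mod_cast Fintype.card_pos
  rw [sum_exp_mul_card_insert]
  calc (Fintype.card β : ℝ) + #S * (exp l - 1)
      = Fintype.card β * (#S * (exp l - 1) / Fintype.card β + 1) := by field_simp; ring
    _ ≤ _ := by gcongr; exact add_one_le_exp _

theorem sum_exp_mul_collisions_fin_le [Nonempty β] {l : ℝ} (hl : 0 ≤ l) (n : ℕ) :
    ∑ g : Fin n → β, exp (l * (n - #(univ.image g))) ≤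
      (Fintype.card β : ℝ) ^ n * exp ((exp l - 1) * n.choose 2 / Fintype.card β) := by
  induction n with
  | zero => simp
  | succ n ih =>
    set d : ℝ := (Fintype.card β : ℝ)
    have hel : 0 ≤ exp l - 1 := by linarith [one_le_exp hl]
    have hstep (g : Fin n → β) :
        ∑ v, exp (l * ((n + 1 : ℕ) - #(univ.image (Fin.cons v g : Fin (n + 1) → β)))) ≤
          exp (l * (n - #(univ.image g))) * (d * exp (n * (exp l - 1) / d)) := by
      have hcard : (#(univ.image g) : ℝ) ≤ n := by
        exact_mod_cast card_image_le.trans (by simp)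
      calc _ = exp (l * (n - #(univ.image g))) *
              ∑ v, exp (l * (#(univ.image g) + 1 - #(insert v (univ.image g)))) := by
            rw [mul_sum]; refine sum_congr rfl fun v _ => ?_
            rw [Fin.image_univ_cons, ← exp_add]; push_cast; ring_nf
        _ ≤ _ := by
            gcongr
            exact (sum_exp_mul_card_insert_le _ l).trans (by gcongr)
    have hchoose : (n + 1).choose 2 = n.choose 2 + n := by
      rw [Nat.choose_succ_succ', Nat.choose_one_right, add_comm]
    calc ∑ g : Fin (n + 1) → β, exp (l * ((n + 1 : ℕ) - #(univ.image g)))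
        = ∑ g : Fin n → β, ∑ v,
            exp (l * ((n + 1 : ℕ) - #(univ.image (Fin.cons v g : Fin (n + 1) → β)))) := by
          rw [← (Fin.consEquiv fun _ => β).sum_comp, Fintype.sum_prod_type, sum_comm]; rfl
      _ ≤ ∑ g : Fin n → β, exp (l * (n - #(univ.image g))) * (d * exp (n * (exp l - 1) / d)) :=
          sum_le_sum fun g _ => hstep g
      _ ≤ d ^ n * exp ((exp l - 1) * n.choose 2 / d) * (d * exp (n * (exp l - 1) / d)) := by
          rw [← sum_mul]; gcongr
      _ = d ^ (n + 1) * exp ((exp l - 1) * (n + 1).choose 2 / d) := by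
          rw [hchoose, Nat.cast_add, mul_add, add_div, exp_add]
          ring_nf

variable [Nonempty β] {ι : Type*} [Fintype ι] [DecidableEq ι] {l : ℝ}

theorem sum_exp_mul_collisions_le (hl : 0 ≤ l) :
    ∑ g : ι → β, exp (l * (Fintype.card ι - #(univ.image g))) ≤
      (Fintype.card β : ℝ) ^ Fintype.card ι *
        exp ((exp l - 1) * (Fintype.card ι).choose 2 / Fintype.card β) := by
  let e := Fintype.equivFin ι
  rw [← (e.arrowCongr (Equiv.refl β)).symm.sum_comp]
  convert sum_exp_mul_collisions_fin_le (β := β) hl (Fintype.card ι) using 4 with g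
  simp [Equiv.arrowCongr, ← image_image, image_univ_equiv]

theorem card_filter_card_image_lt_le (hl : 0 ≤ l) (a : ℝ) :
    (#{g : ι → β | #(univ.image g) < Fintype.card ι - a} : ℝ) ≤
      (Fintype.card β : ℝ) ^ Fintype.card ι *
        exp ((exp l - 1) * (Fintype.card ι).choose 2 / Fintype.card β - l * a) := by
  rw [exp_sub, ← mul_div_assoc, le_div_iff₀ (exp_pos _)]
  calc (#{g : ι → β | #(univ.image g) < Fintype.card ι - a} : ℝ) * exp (l * a)
      = ∑ g : ι → β with #(univ.image g) < Fintype.card ι - a, exp (l * a) := by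
        rw [sum_const, nsmul_eq_mul]
    _ ≤ ∑ g : ι → β with #(univ.image g) < Fintype.card ι - a,
          exp (l * (Fintype.card ι - #(univ.image g))) := by
        gcongr with g hg
        linarith [(mem_filter.1 hg).2]
    _ ≤ ∑ g : ι → β, exp (l * (Fintype.card ι - #(univ.image g))) :=
        sum_le_sum_of_subset_of_nonneg (filter_subset _ _) fun _ _ _ => (exp_pos _).le
    _ ≤ _ := sum_exp_mul_collisions_le hl

end Collisions

section Probability

variable {Ω ι β : Type*} [MeasurableSpace Ω] {μ : Measure Ω} [Fintype ι]
  [MeasurableSpace β] [MeasurableSingletonClass β] {X : ι → Ω → β}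

theorem ProbabilityTheory.iIndepFun.measure_tuple_mem_le (hX : iIndepFun X μ) {c : ENNReal}
    (hc : ∀ i v, μ {ω | X i ω = v} = c) (S : Finset (ι → β)) :
    μ {ω | (fun i => X i ω) ∈ S} ≤ #S * c ^ Fintype.card ι := by
  have hcell (g : ι → β) :
      μ (⋂ i ∈ (univ : Finset ι), X i ⁻¹' {g i}) = c ^ Fintype.card ι := by
    rw [hX.measure_inter_preimage_eq_mul univ fun i _ => measurableSet_singleton (g i)]
    simp [Set.preimage, hc]
  calc μ {ω | (fun i => X i ω) ∈ S}
      = μ (⋃ g ∈ S, ⋂ i ∈ (univ : Finset ι), X i ⁻¹' {g i}) := by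
        congr 1; ext ω
        simp only [Set.mem_ofPred_eq, Set.mem_iUnion, Set.mem_iInter, Set.mem_preimage,
          Set.mem_singleton_iff, exists_prop]
        exact ⟨fun h => ⟨_, h, fun _ _ => rfl⟩,
          fun ⟨g, hg, h⟩ => funext (fun i => h i (mem_univ i)) ▸ hg⟩
    _ ≤ ∑ g ∈ S, μ (⋂ i ∈ (univ : Finset ι), X i ⁻¹' {g i}) := measure_biUnion_finset_le _ _
    _ = #S * c ^ Fintype.card ι := by
        rw [sum_congr rfl fun g _ => hcell g, sum_const, nsmul_eq_mul]

variable [Fintype β] [Nonempty β] [DecidableEq β] [DecidableEq ι]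

theorem ProbabilityTheory.iIndepFun.measure_card_image_lt_le (hX : iIndepFun X μ)
    (hunif : ∀ i v, μ {ω | X i ω = v} = (Fintype.card β : ENNReal)⁻¹) {l : ℝ} (hl : 0 ≤ l)
    (a : ℝ) :
    μ {ω | #(univ.image fun i => X i ω) < Fintype.card ι - a} ≤
      ENNReal.ofReal
        (exp ((exp l - 1) * (Fintype.card ι).choose 2 / Fintype.card β - l * a)) := by
  have hd : (0 : ℝ) < Fintype.card β := by exact_mod_cast Fintype.card_pos
  set bad : Finset (ι → β) := {g | #(univ.image g) < Fintype.card ι - a}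
  calc μ {ω | #(univ.image fun i => X i ω) < Fintype.card ι - a}
      = μ {ω | (fun i => X i ω) ∈ bad} := by simp [bad]
    _ ≤ #bad * (Fintype.card β : ENNReal)⁻¹ ^ Fintype.card ι := hX.measure_tuple_mem_le hunif _
    _ = ENNReal.ofReal (#bad / (Fintype.card β : ℝ) ^ Fintype.card ι) := by
        rw [ENNReal.ofReal_div_of_pos (by positivity), ENNReal.ofReal_natCast,
          ENNReal.ofReal_pow hd.le, ENNReal.ofReal_natCast, div_eq_mul_inv, ENNReal.inv_pow]
    _ ≤ _ := by
        gcongr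
        rw [div_le_iff₀' (by positivity)]
        exact card_filter_card_image_lt_le hl a

theorem ProbabilityTheory.iIndepFun.measure_card_image_lt_le_of_bernstein (hX : iIndepFun X μ)
    (hunif : ∀ i v, μ {ω | X i ω = v} = (Fintype.card β : ENNReal)⁻¹) {B t a : ℝ}
    (hB : ((Fintype.card ι).choose 2 : ℝ) / Fintype.card β ≤ B) (hB₀ : 0 < B) (ht : 0 < t)
    (hvar : 4 * a * B ≤ t ^ 2) (hscale : 4 * a / 3 ≤ t) :
    μ {ω | #(univ.image fun i => X i ω) < Fintype.card ι - B - t} ≤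
      ENNReal.ofReal (exp (-a)) := by
  obtain ⟨l, hl, hla⟩ := exists_exp_sub_one_mul_sub_le hB₀ ht hvar hscale
  have hel : 0 ≤ exp l - 1 := by linarith [one_le_exp hl]
  simp_rw [sub_sub]
  refine (hX.measure_card_image_lt_le hunif hl (B + t)).trans ?_
  gcongr
  calc (exp l - 1) * (Fintype.card ι).choose 2 / Fintype.card β - l * (B + t)
      = (exp l - 1) * (((Fintype.card ι).choose 2 : ℝ) / Fintype.card β) - l * (B + t) := by
        ring
    _ ≤ (exp l - 1) * B - l * (B + t) := by gcongr
    _ ≤ -a := hla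

end Probability

theorem measure_card_hash_image_lt_le {Ω A : Type*} [MeasurableSpace Ω] {μ : Measure Ω}
    {k d s : ℕ} (hk : 0 < k) (hd : 0 < d) (hs : 0 < s) (ψ : Fin k → Ω → A → Fin d)
    (hunif : ∀ j a v, μ {ω | ψ j ω a = v} = (d : ENNReal)⁻¹) (X : Finset A) (hXs : #X = s)
    (hindep : iIndepFun (fun (p : Fin k × X) ω => ψ p.1 ω p.2.1) μ) {t L : ℝ} (hL : 0 < L)
    (hvar : 2 * (s : ℝ) ^ 3 * k ^ 2 / d * L ≤ t ^ 2) (hscale : 4 * (s : ℝ) / 3 * L ≤ t) :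
    μ {ω | (#((univ ×ˢ X).image fun p : Fin k × A => ψ p.1 ω p.2) : ℝ) <
        s * k - (s : ℝ) ^ 2 * k ^ 2 / (2 * d) - t} ≤ ENNReal.ofReal (exp (-(s * L))) := by
  classical
  have : NeZero d := ⟨hd.ne'⟩
  have hcard : Fintype.card (Fin k × X) = k * s := by simp [hXs]
  have hB : (((k * s).choose 2 : ℕ) : ℝ) / d ≤ (s : ℝ) ^ 2 * k ^ 2 / (2 * d) :=
    calc (((k * s).choose 2 : ℕ) : ℝ) / d ≤ ((k * s : ℕ) : ℝ) ^ 2 / 2! / d := by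
          gcongr; exact Nat.choose_le_pow_div 2 (k * s)
      _ = (s : ℝ) ^ 2 * k ^ 2 / (2 * d) := by push_cast; ring
  have hbound := hindep.measure_card_image_lt_le_of_bernstein (t := t) (a := s * L)
    (fun p v => by simpa using hunif p.1 p.2.1 v) (by simpa [hcard] using hB) (by positivity)
    ((by positivity : (0 : ℝ) < 4 * s / 3 * L).trans_le hscale)
    ((le_of_eq (by field_simp; ring)).trans hvar) (by linarith)
  simp_rw [image_univ_product]
  convert hbound using 4
  simp [hcard, mul_comm]

theorem ofReal_one_sub_le_measure_biInter {Ω α : Type*} [MeasurableSpace Ω] {μ : Measure Ω}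
    [IsProbabilityMeasure μ] (F : Finset α) (E : α → Set Ω) {ε : ℝ} (hε : 0 ≤ ε)
    (h : ∑ i ∈ F, μ (E i)ᶜ ≤ ENNReal.ofReal ε) :
    ENNReal.ofReal (1 - ε) ≤ μ (⋂ i ∈ F, E i) := by
  have hcompl : μ (⋂ i ∈ F, E i)ᶜ ≤ ENNReal.ofReal ε := by
    rw [Set.compl_iInter₂]
    exact (measure_biUnion_finset_le _ _).trans h
  rw [ENNReal.ofReal_sub _ hε, ENNReal.ofReal_one, tsub_le_iff_right, ← measure_univ (μ := μ)]
  exact (measure_univ_le_add_compl _).trans (by gcongr)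

theorem stmt_13_general {Ω : Type*} [MeasurableSpace Ω] (μ : Measure Ω)
    [IsProbabilityMeasure μ]
    {A : Type*} [Fintype A] (m : ℕ) (hm : Fintype.card A = m)
    (k d s : ℕ) (hk : 0 < k) (hd : 0 < d) (hs : 0 < s)
    (ψ : Fin k → Ω → A → Fin d)
    (hunif : ∀ j a v, μ {ω | ψ j ω a = v} = (d : ENNReal)⁻¹)
    (hindep : ∀ X : Finset A, X.card = s →
      iIndepFun
        (fun (p : Fin k × {a : A // a ∈ X}) ω => ψ p.1 ω p.2.1) μ)
    (δ : ℝ) (hδ0 : 0 < δ) (hδ1 : δ < 1) :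
    ENNReal.ofReal (1 - δ) ≤
      μ {ω | ∀ X : Finset A, X.card = s →
        (((Finset.univ ×ˢ X).image fun p : Fin k × A => ψ p.1 ω p.2).card : ℝ)
          ≥ (s : ℝ) * k - (s : ℝ) ^ 2 * k ^ 2 / (2 * d)
            - max (Real.sqrt ((2 * (s : ℝ) ^ 3 * k ^ 2 / d) * Real.log (m / δ)))
                ((4 * (s : ℝ) / 3) * Real.log (m / δ))} := by
  set L := log (m / δ)
  set t := max (√(2 * (s : ℝ) ^ 3 * k ^ 2 / d * L)) (4 * (s : ℝ) / 3 * L)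
  have hbad (X : Finset A) (hX : X ∈ powersetCard s univ) :
      μ {ω | (#((univ ×ˢ X).image fun p : Fin k × A => ψ p.1 ω p.2) : ℝ) ≥
        s * k - (s : ℝ) ^ 2 * k ^ 2 / (2 * d) - t}ᶜ ≤ ENNReal.ofReal ((δ / m) ^ s) := by
    rw [mem_powersetCard_univ] at hX
    have hsm : (s : ℝ) ≤ m := by rw [← hX, ← hm]; exact_mod_cast card_le_univ X
    have hm₁ : (1 : ℝ) ≤ m := le_trans (by exact_mod_cast hs) hsm
    have hL : 0 < L := log_pos (by rw [lt_div_iff₀ hδ0]; linarith)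
    have hexp : exp (-(s * L)) = (δ / m) ^ s := by
      rw [← mul_neg, ← log_inv, inv_div, exp_nat_mul, exp_log (div_pos hδ0 (by linarith))]
    simpa only [Set.compl_ofPred, not_le, hexp] using
      measure_card_hash_image_lt_le hk hd hs ψ hunif X hX (hindep X hX) hL
        (sqrt_le_iff.1 (le_max_left _ _)).2 (le_max_right _ _)
  convert ofReal_one_sub_le_measure_biInter _ _ hδ0.le ((sum_le_sum hbad).trans ?_) using 2
  · ext ω; simp
  · rw [sum_const, card_powersetCard, card_univ, hm, nsmul_eq_mul, ← ENNReal.ofReal_natCast,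
      ← ENNReal.ofReal_mul (by positivity)]
    exact ENNReal.ofReal_le_ofReal (Nat.choose_mul_div_pow_le hδ0.le hδ1.le m hs.ne')

/-- Lemma 1 of the paper (hash-collision lemma): with probability
at least `1 − δ`, simultaneously for every `s`-element set `X`, the number of
distinct values among the `sk` hashes of the symbols of `X` is at least
`sk − s²k²/(2d) − max{√((2s³k²/d) log(m/δ)), (4s/3) log(m/δ)}`. -/
theorem stmt_13 {Ω : Type*} [MeasurableSpace Ω] (μ : Measure Ω)
    [IsProbabilityMeasure μ]
    {A : Type*} [Fintype A] [DecidableEq A] (m : ℕ) (hm : Fintype.card A = m)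
    (k d s : ℕ) (hk : 0 < k) (hd : 0 < d) (hs : 0 < s)
    (ψ : Fin k → Ω → A → Fin d)
    (hmeas : ∀ j a, Measurable fun ω => ψ j ω a)
    (hunif : ∀ j a v, μ {ω | ψ j ω a = v} = (d : ENNReal)⁻¹)
    (hindep : ∀ X : Finset A, X.card = s →
      iIndepFun
        (fun (p : Fin k × {a : A // a ∈ X}) ω => ψ p.1 ω p.2.1) μ)
    (δ : ℝ) (hδ0 : 0 < δ) (hδ1 : δ < 1) :
    ENNReal.ofReal (1 - δ) ≤
      μ {ω | ∀ X : Finset A, X.card = s →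
        (((Finset.univ ×ˢ X).image fun p : Fin k × A => ψ p.1 ω p.2).card : ℝ)
          ≥ (s : ℝ) * k - (s : ℝ) ^ 2 * k ^ 2 / (2 * d)
            - max (Real.sqrt ((2 * (s : ℝ) ^ 3 * k ^ 2 / d) * Real.log (m / δ)))
                ((4 * (s : ℝ) / 3) * Real.log (m / δ))} :=
  stmt_13_general μ m hm k d s hk hd hs ψ hunif hindep δ hδ0 hδ1
end

section
/- With Bloom-filter encodings φ(x_c), φ(x_c') ∈ {0,1}^d of two sets x_c, x_c' ⊂ A built with k hash-functions (φ(x)_i = 1 iff some hash of some element of x equals i): if Z is the number of distinct values among the k·|x_c ∪ x_c'| hashes of symbols in x_c ∪ x_c', then |φ(x_c)·φ(x_c') − k·|x_c ∩ x_c'|| ≤ k·|x_c ∪ x_c'| − Z. -/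
/-- deterministic error bound for Bloom-filter dot-products:
the deviation from `k·|x_c ∩ x_c'|` is at most the number of non-unique hashes
`k·|x_c ∪ x_c'| − Z`, where `Z` is the number of distinct hash values among
the symbols of the union. -/
theorem stmt_15 {A : Type*} [DecidableEq A] (k d : ℕ)
    (ψ : Fin k → A → Fin d)
    (xc xc' : Finset A)
    (Z : ℕ)
    (hZ : Z = ((Finset.univ ×ˢ (xc ∪ xc')).image
      fun p : Fin k × A => ψ p.1 p.2).card) :
    |(∑ i : Fin d,
        (if ∃ a ∈ xc, ∃ j : Fin k, ψ j a = i then (1 : ℝ) else 0) *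
        (if ∃ a ∈ xc', ∃ j : Fin k, ψ j a = i then (1 : ℝ) else 0))
      - (k : ℝ) * ((xc ∩ xc').card : ℝ)|
      ≤ (k : ℝ) * ((xc ∪ xc').card : ℝ) - (Z : ℝ) := by
  classical
  set f : Fin k × A → Fin d := fun p => ψ p.1 p.2 with hf
  set T1 := (Finset.univ ×ˢ xc).image f with hT1
  set T2 := (Finset.univ ×ˢ xc').image f with hT2
  have hmem : ∀ (s : Finset A) (i : Fin d),
      (∃ a ∈ s, ∃ j : Fin k, ψ j a = i) ↔ i ∈ (Finset.univ ×ˢ s).image f := by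
    intro s i
    simp only [Finset.mem_image, Finset.mem_product, Finset.mem_univ, true_and,
      Prod.exists, hf]
    tauto
  -- the dot product equals the cardinality of T1 ∩ T2
  have hsum : (∑ i : Fin d,
      (if ∃ a ∈ xc, ∃ j : Fin k, ψ j a = i then (1 : ℝ) else 0) *
      (if ∃ a ∈ xc', ∃ j : Fin k, ψ j a = i then (1 : ℝ) else 0))
      = ((T1 ∩ T2).card : ℝ) := by
    have e1 : ∀ i : Fin d, (∃ a ∈ xc, ∃ j : Fin k, ψ j a = i) ↔ i ∈ T1 :=
      fun i => hmem xc i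
    have e2 : ∀ i : Fin d, (∃ a ∈ xc', ∃ j : Fin k, ψ j a = i) ↔ i ∈ T2 :=
      fun i => hmem xc' i
    have key : ∀ i : Fin d,
        (if ∃ a ∈ xc, ∃ j : Fin k, ψ j a = i then (1 : ℝ) else 0) *
        (if ∃ a ∈ xc', ∃ j : Fin k, ψ j a = i then (1 : ℝ) else 0)
        = if i ∈ T1 ∩ T2 then (1 : ℝ) else 0 := by
      intro i
      simp only [e1 i, e2 i, Finset.mem_inter]
      by_cases h1 : i ∈ T1 <;> by_cases h2 : i ∈ T2 <;> simp [h1, h2]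
    rw [Finset.sum_congr rfl fun i _ => key i]
    rw [Finset.sum_ite_mem, Finset.univ_inter, Finset.sum_const]
    simp
  rw [hsum]
  -- Z is the cardinality of T1 ∪ T2
  have hZ' : Z = (T1 ∪ T2).card := by
    rw [hZ, hT1, hT2, Finset.product_union, Finset.image_union]
  -- basic cardinality facts in ℕ
  have h1 : (T1 ∩ T2).card + (T1 ∪ T2).card = T1.card + T2.card :=
    Finset.card_inter_add_card_union T1 T2
  have h2 : k * (xc ∩ xc').card + k * (xc ∪ xc').card
      = k * xc.card + k * xc'.card := by
    rw [← Nat.mul_add, ← Nat.mul_add, Finset.card_inter_add_card_union]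
  have h3 : T1.card ≤ k * xc.card := by
    calc T1.card ≤ (Finset.univ ×ˢ xc).card := Finset.card_image_le
    _ = k * xc.card := by rw [Finset.card_product]; simp
  have h4 : T2.card ≤ k * xc'.card := by
    calc T2.card ≤ (Finset.univ ×ˢ xc').card := Finset.card_image_le
    _ = k * xc'.card := by rw [Finset.card_product]; simp
  have hsub : ∀ s t : Finset A, (Finset.univ ×ˢ t).image f ⊆
      (Finset.univ ×ˢ s).image f ∪ (Finset.univ ×ˢ (t \ s)).image f := by
    intro s t
    rw [← Finset.image_union, ← Finset.product_union]
    apply Finset.image_subset_image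
    apply Finset.product_subset_product_right
    intro a ha
    by_cases h : a ∈ s <;> simp [h, ha]
  have h5 : (T1 ∪ T2).card ≤ T1.card + k * (xc' \ xc).card := by
    calc (T1 ∪ T2).card
        ≤ (T1 ∪ (Finset.univ ×ˢ (xc' \ xc)).image f).card := by
          apply Finset.card_le_card
          exact Finset.union_subset Finset.subset_union_left (hsub xc xc')
      _ ≤ T1.card + ((Finset.univ ×ˢ (xc' \ xc)).image f).card :=
          Finset.card_union_le _ _
      _ ≤ T1.card + k * (xc' \ xc).card := by
          gcongr
          calc ((Finset.univ ×ˢ (xc' \ xc)).image f).card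
              ≤ (Finset.univ ×ˢ (xc' \ xc)).card := Finset.card_image_le
            _ = k * (xc' \ xc).card := by rw [Finset.card_product]; simp
  have h6 : (T1 ∪ T2).card ≤ T2.card + k * (xc \ xc').card := by
    calc (T1 ∪ T2).card
        ≤ (T2 ∪ (Finset.univ ×ˢ (xc \ xc')).image f).card := by
          apply Finset.card_le_card
          rw [Finset.union_comm T1 T2]
          exact Finset.union_subset Finset.subset_union_left (hsub xc' xc)
      _ ≤ T2.card + ((Finset.univ ×ˢ (xc \ xc')).image f).card :=
          Finset.card_union_le _ _
      _ ≤ T2.card + k * (xc \ xc').card := by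
          gcongr
          calc ((Finset.univ ×ˢ (xc \ xc')).image f).card
              ≤ (Finset.univ ×ˢ (xc \ xc')).card := Finset.card_image_le
            _ = k * (xc \ xc').card := by rw [Finset.card_product]; simp
  have h7 : k * (xc ∪ xc').card = k * xc.card + k * (xc' \ xc).card := by
    rw [← Nat.mul_add, Finset.union_comm, ← Finset.card_sdiff_add_card,
      Nat.add_comm]
  have h8 : k * (xc ∪ xc').card = k * xc'.card + k * (xc \ xc').card := by
    rw [← Nat.mul_add, ← Finset.card_sdiff_add_card, Nat.add_comm]
  -- cast everything to ℝ and finish by linear arithmetic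
  have r1 : ((T1 ∩ T2).card : ℝ) + ((T1 ∪ T2).card : ℝ)
      = (T1.card : ℝ) + (T2.card : ℝ) := by exact_mod_cast h1
  have r2 : (k : ℝ) * ((xc ∩ xc').card : ℝ) + (k : ℝ) * ((xc ∪ xc').card : ℝ)
      = (k : ℝ) * (xc.card : ℝ) + (k : ℝ) * (xc'.card : ℝ) := by
    exact_mod_cast h2
  have r3 : (T1.card : ℝ) ≤ (k : ℝ) * (xc.card : ℝ) := by exact_mod_cast h3
  have r4 : (T2.card : ℝ) ≤ (k : ℝ) * (xc'.card : ℝ) := by exact_mod_cast h4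
  have r5 : ((T1 ∪ T2).card : ℝ)
      ≤ (T1.card : ℝ) + (k : ℝ) * ((xc' \ xc).card : ℝ) := by exact_mod_cast h5
  have r6 : ((T1 ∪ T2).card : ℝ)
      ≤ (T2.card : ℝ) + (k : ℝ) * ((xc \ xc').card : ℝ) := by exact_mod_cast h6
  have r7 : (k : ℝ) * ((xc ∪ xc').card : ℝ)
      = (k : ℝ) * (xc.card : ℝ) + (k : ℝ) * ((xc' \ xc).card : ℝ) := by
    exact_mod_cast h7
  have r8 : (k : ℝ) * ((xc ∪ xc').card : ℝ)
      = (k : ℝ) * (xc'.card : ℝ) + (k : ℝ) * ((xc \ xc').card : ℝ) := by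
    exact_mod_cast h8
  have rZ : (Z : ℝ) = ((T1 ∪ T2).card : ℝ) := by exact_mod_cast hZ'
  rw [abs_le]
  constructor <;> linarith
end

section
/- Let p,q be the closest pair of points between the convex hulls of finite sets Z, Z' ⊂ ℝ^m with γ = ‖p−q‖² > 0, and let φ be Δ-dot-product preserving on Z ∪ Z' with Δ < γ/6. Define θ = Σ αᵢ φ(xᵢ) − Σ βⱼ φ(x'ⱼ) where p = Σ αᵢ xᵢ and q = Σ βⱼ x'ⱼ are convex-combination representations, and ν = −(‖φ(p)‖² − ‖φ(q)‖²)/2 with φ(p) = Σ αᵢ φ(xᵢ), φ(q) = Σ βⱼ φ(x'ⱼ). Then for every x₀ ∈ Z: θ·φ(x₀) + ν ≥ x₀·(p−q) − (‖p‖²−‖q‖²)/2 − 3Δ. -/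
open RealInnerProductSpace

lemma aux_double_17 {ι : Type*} (t : Finset ι) (a : ι → ℝ)
    (ha : ∀ i ∈ t, 0 ≤ a i) (has : ∑ i ∈ t, a i = 1)
    (f g : ι → ι → ℝ) (Δ : ℝ)
    (h : ∀ i ∈ t, ∀ j ∈ t, f i j ≤ g i j + Δ) :
    ∑ i ∈ t, ∑ j ∈ t, a i * (a j * f i j)
      ≤ (∑ i ∈ t, ∑ j ∈ t, a i * (a j * g i j)) + Δ := by
  have hΔ : ∑ i ∈ t, ∑ j ∈ t, a i * (a j * Δ) = Δ := by
    simp only [← Finset.mul_sum, ← Finset.sum_mul, has, one_mul]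
  calc ∑ i ∈ t, ∑ j ∈ t, a i * (a j * f i j)
      ≤ ∑ i ∈ t, ∑ j ∈ t, (a i * (a j * g i j) + a i * (a j * Δ)) := by
        refine Finset.sum_le_sum fun i hi => Finset.sum_le_sum fun j hj => ?_
        calc a i * (a j * f i j) = (a i * a j) * f i j := by ring
          _ ≤ (a i * a j) * (g i j + Δ) :=
              mul_le_mul_of_nonneg_left (h i hi j hj)
                (mul_nonneg (ha i hi) (ha j hj))
          _ = a i * (a j * g i j) + a i * (a j * Δ) := by ring
    _ = _ := by simp only [Finset.sum_add_distrib, hΔ]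

/-- key chained inequality in the proof of Theorem 1:
`θ·φ(x₀) + ν ≥ x₀·(p−q) − (‖p‖²−‖q‖²)/2 − 3Δ` for every `x₀ ∈ Z`. -/
theorem stmt_17 {m d : ℕ}
    (φ : EuclideanSpace ℝ (Fin m) → EuclideanSpace ℝ (Fin d))
    (Z Z' : Set (EuclideanSpace ℝ (Fin m)))
    (hZfin : Z.Finite) (hZ'fin : Z'.Finite)
    (Δ γ : ℝ)
    (hφ : ∀ x ∈ Z ∪ Z', ∀ x' ∈ Z ∪ Z', |⟪φ x, φ x'⟫ - ⟪x, x'⟫| ≤ Δ)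
    {ι ι' : Type*} (t : Finset ι) (t' : Finset ι')
    (α : ι → ℝ) (β : ι' → ℝ)
    (x : ι → EuclideanSpace ℝ (Fin m)) (x' : ι' → EuclideanSpace ℝ (Fin m))
    (hx : ∀ i ∈ t, x i ∈ Z) (hx' : ∀ j ∈ t', x' j ∈ Z')
    (hα : ∀ i ∈ t, 0 ≤ α i) (hβ : ∀ j ∈ t', 0 ≤ β j)
    (hαs : ∑ i ∈ t, α i = 1) (hβs : ∑ j ∈ t', β j = 1)
    (p q : EuclideanSpace ℝ (Fin m))
    (hp : p = ∑ i ∈ t, α i • x i) (hq : q = ∑ j ∈ t', β j • x' j)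
    (hclosest : ∀ p' ∈ convexHull ℝ Z, ∀ q' ∈ convexHull ℝ Z', ‖p - q‖ ≤ ‖p' - q'‖)
    (hγ : γ = ‖p - q‖ ^ 2) (hγpos : 0 < γ) (hΔ : Δ < γ / 6)
    (φp φq θ : EuclideanSpace ℝ (Fin d)) (ν : ℝ)
    (hφp : φp = ∑ i ∈ t, α i • φ (x i)) (hφq : φq = ∑ j ∈ t', β j • φ (x' j))
    (hθ : θ = φp - φq) (hν : ν = -((‖φp‖ ^ 2 - ‖φq‖ ^ 2) / 2)) :
    ∀ x₀ ∈ Z,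
      ⟪θ, φ x₀⟫ + ν ≥ ⟪x₀, p - q⟫ - (‖p‖ ^ 2 - ‖q‖ ^ 2) / 2 - 3 * Δ := by
  intro x₀ hx₀
  have hx₀' : x₀ ∈ Z ∪ Z' := Or.inl hx₀
  have h1 : ⟪φp, φ x₀⟫ ≥ ⟪p, x₀⟫ - Δ := by
    rw [hφp, hp, sum_inner, sum_inner]
    have heq : (∑ i ∈ t, ⟪α i • x i, x₀⟫) - Δ
        = ∑ i ∈ t, (⟪α i • x i, x₀⟫ - α i * Δ) := by
      rw [Finset.sum_sub_distrib, ← Finset.sum_mul, hαs]; ring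
    rw [ge_iff_le, heq]
    refine Finset.sum_le_sum fun i hi => ?_
    rw [real_inner_smul_left, real_inner_smul_left]
    have hb := abs_le.mp (hφ (x i) (Or.inl (hx i hi)) x₀ hx₀')
    nlinarith [hα i hi, hb.1, hb.2]
  have h2 : ⟪φq, φ x₀⟫ ≤ ⟪q, x₀⟫ + Δ := by
    rw [hφq, hq, sum_inner, sum_inner]
    have heq : (∑ j ∈ t', ⟪β j • x' j, x₀⟫) + Δ
        = ∑ j ∈ t', (⟪β j • x' j, x₀⟫ + β j * Δ) := by
      rw [Finset.sum_add_distrib, ← Finset.sum_mul, hβs]; ring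
    rw [heq]
    refine Finset.sum_le_sum fun j hj => ?_
    rw [real_inner_smul_left, real_inner_smul_left]
    have hb := abs_le.mp (hφ (x' j) (Or.inr (hx' j hj)) x₀ hx₀')
    nlinarith [hβ j hj, hb.1, hb.2]
  have h3 : ‖φp‖ ^ 2 ≤ ‖p‖ ^ 2 + Δ := by
    rw [← real_inner_self_eq_norm_sq, ← real_inner_self_eq_norm_sq, hφp, hp]
    simp only [sum_inner, inner_sum, real_inner_smul_left, real_inner_smul_right]
    exact aux_double_17 t α hα hαs (fun i j => ⟪φ (x j), φ (x i)⟫)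
      (fun i j => ⟪x j, x i⟫) Δ (fun i hi j hj => by
        have hb := abs_le.mp (hφ (x j) (Or.inl (hx j hj)) (x i) (Or.inl (hx i hi)))
        linarith [hb.2])
  have h4 : ‖φq‖ ^ 2 ≥ ‖q‖ ^ 2 - Δ := by
    rw [← real_inner_self_eq_norm_sq, ← real_inner_self_eq_norm_sq, hφq, hq]
    simp only [sum_inner, inner_sum, real_inner_smul_left, real_inner_smul_right]
    rw [ge_iff_le, sub_le_iff_le_add]
    exact aux_double_17 t' β hβ hβs (fun i j => ⟪x' j, x' i⟫)
      (fun i j => ⟪φ (x' j), φ (x' i)⟫) Δ (fun i hi j hj => by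
        have hb := abs_le.mp (hφ (x' j) (Or.inr (hx' j hj)) (x' i) (Or.inr (hx' i hi)))
        linarith [hb.1])
  have hcross : ⟪x₀, p - q⟫ = ⟪p, x₀⟫ - ⟪q, x₀⟫ := by
    rw [inner_sub_right, real_inner_comm x₀ p, real_inner_comm x₀ q]
  rw [hθ, inner_sub_left, hν, hcross]
  linarith
end
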